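/- arXiv:2312.08061 — 2 statements merged into one kernel-verified Lean document; each statement's English description precedes it below -/
import Mathlib

section
/- Every normal subgroup of the finitary symmetric group S_ℕ is either trivial, equal to the finitary alternating group A_ℕ, or equal to S_ℕ itself. -/
/-- The support of a permutation of `ℕ`. -/
def fsupp (σ : Equiv.Perm ℕ) : Set ℕ := {x | σ x ≠ x}

lemma fsupp_one : fsupp (1 : Equiv.Perm ℕ) = ∅ := by
  ext x; simp [fsupp]

lemma fsupp_mul_subset (a b : Equiv.Perm ℕ) : fsupp (a * b) ⊆ fsupp a ∪ fsupp b := by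
  intro x hx
  by_contra hmem
  simp only [Set.mem_union, fsupp, Set.mem_setOf_eq, not_or, not_not] at hmem
  exact hx (show a (b x) = x by rw [hmem.2, hmem.1])

lemma fsupp_inv (a : Equiv.Perm ℕ) : fsupp a⁻¹ = fsupp a := by
  ext x
  simp only [fsupp, Set.mem_setOf_eq, ne_eq, Equiv.Perm.inv_eq_iff_eq]
  exact not_congr eq_comm

/-- `S_ℕ`, the group of finitely supported permutations of `ℕ`. -/
def SN : Subgroup (Equiv.Perm ℕ) where
  carrier := {σ | (fsupp σ).Finite}
  one_mem' := by
    show (fsupp (1 : Equiv.Perm ℕ)).Finite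
    rw [fsupp_one]; exact Set.finite_empty
  mul_mem' := by
    intro a b ha hb
    exact Set.Finite.subset (Set.Finite.union ha hb) (fsupp_mul_subset a b)
  inv_mem' := by
    intro a ha
    show (fsupp a⁻¹).Finite
    rw [fsupp_inv]; exact ha

/-- `IsSwap σ` means `σ` is a transposition. -/
def IsSwap (σ : Equiv.Perm ℕ) : Prop := ∃ i j, i ≠ j ∧ σ = Equiv.swap i j

/-- `A_ℕ`, the finitary alternating group: finite products of an even number of
transpositions. -/
def AN : Subgroup (Equiv.Perm ℕ) where
  carrier := {σ | ∃ l : List (Equiv.Perm ℕ), (∀ τ ∈ l, IsSwap τ) ∧ Even l.length ∧ σ = l.prod}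
  one_mem' := ⟨[], by simp, by simp, by simp⟩
  mul_mem' := by
    rintro a b ⟨l, hl, hle, rfl⟩ ⟨m, hm, hme, rfl⟩
    refine ⟨l ++ m, ?_, by simpa using hle.add hme, (List.prod_append).symm⟩
    intro τ hτ
    rcases List.mem_append.mp hτ with h | h
    exacts [hl τ h, hm τ h]
  inv_mem' := by
    rintro a ⟨l, hl, hle, rfl⟩
    refine ⟨(l.map fun x => x⁻¹).reverse, ?_, by simpa using hle, ?_⟩
    · intro τ hτ
      simp only [List.mem_reverse, List.mem_map] at hτ
      obtain ⟨σ, hσ, rfl⟩ := hτ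
      obtain ⟨i, j, hij, rfl⟩ := hl σ hσ
      exact ⟨i, j, hij, by simp⟩
    · rw [List.prod_inv_reverse]

/-- The group of finitely supported permutations of `ℕ` supported inside `A`. -/
def SOn (A : Set ℕ) : Subgroup (Equiv.Perm ℕ) where
  carrier := {σ | (fsupp σ).Finite ∧ fsupp σ ⊆ A}
  one_mem' := by
    constructor <;> rw [fsupp_one]
    exacts [Set.finite_empty, Set.empty_subset A]
  mul_mem' := by
    intro a b ha hb
    exact ⟨Set.Finite.subset (Set.Finite.union ha.1 hb.1) (fsupp_mul_subset a b),
      (fsupp_mul_subset a b).trans (Set.union_subset ha.2 hb.2)⟩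
  inv_mem' := by
    intro a ha
    constructor <;> rw [fsupp_inv]
    exacts [ha.1, ha.2]

lemma swap_mem_SN (i j : ℕ) : Equiv.swap i j ∈ SN := by
  have : fsupp (Equiv.swap i j) ⊆ {i, j} := by
    intro x hx
    by_contra hmem
    simp only [Set.mem_insert_iff, Set.mem_singleton_iff, not_or] at hmem
    exact hx (Equiv.swap_apply_of_ne_of_ne hmem.1 hmem.2)
  exact Set.Finite.subset (Set.toFinite _) this

/-- The 3-cycle `(a b c)` sending `a ↦ b ↦ c ↦ a`. -/
def cycle3 (a b c : ℕ) : Equiv.Perm ℕ := Equiv.swap a c * Equiv.swap a b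

lemma cycle3_mem_SN (a b c : ℕ) : cycle3 a b c ∈ SN :=
  mul_mem (swap_mem_SN a c) (swap_mem_SN a b)

/-!
A nontrivial `σ ∈ N` moves some point `a` to `b ≠ a`. Being finitary, `σ` fixes two fresh points
`c, e`, and then the commutator of `σ` with the 3-cycle `(a c e)` is the 3-cycle `(a b c)`.
All 3-cycles are conjugate in `S_ℕ`, and every product of two transpositions is a product of
3-cycles, so `A_ℕ ≤ N`. If moreover `N ⊄ A_ℕ`, an odd product of transpositions in `N` exhibits a
transposition `τ ∈ N`; every transposition `σ = (σ τ) τ` then lies in `N`, and these generate `S_ℕ`.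
-/

lemma SN_eq_closure_isSwap : SN = Subgroup.closure {σ | σ.IsSwap} := by
  ext σ
  exact mem_closure_isSwap'.symm

lemma exists_isSwap_list_of_mem_SN {σ : Equiv.Perm ℕ} (hσ : σ ∈ SN) :
    ∃ l : List (Equiv.Perm ℕ), (∀ τ ∈ l, IsSwap τ) ∧ σ = l.prod := by
  rw [SN_eq_closure_isSwap] at hσ
  induction hσ using Subgroup.closure_induction_left with
  | one => exact ⟨[], by simp, rfl⟩
  | mul_left τ hτ _ _ ih =>
    obtain ⟨l, hl, rfl⟩ := ih
    exact ⟨τ :: l, by simpa using ⟨hτ, hl⟩, rfl⟩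
  | inv_mul_cancel τ hτ _ _ ih =>
    obtain ⟨l, hl, rfl⟩ := ih
    obtain ⟨x, y, hxy, rfl⟩ := hτ
    exact ⟨Equiv.swap x y :: l, by simpa using ⟨⟨x, y, hxy, rfl⟩, hl⟩, by simp⟩

lemma list_prod_mem_of_even_length {M : Type*} [Monoid M] (N : Submonoid M) {s : Set M}
    (hs : ∀ x ∈ s, ∀ y ∈ s, x * y ∈ N) :
    ∀ {l : List M}, (∀ x ∈ l, x ∈ s) → Even l.length → l.prod ∈ N
  | [], _, _ => N.one_mem
  | [_], _, h => absurd h Nat.not_even_one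
  | x :: y :: l, hl, h => by
    rw [List.prod_cons, List.prod_cons, ← mul_assoc]
    refine N.mul_mem (hs x (hl x (by simp)) y (hl y (by simp))) ?_
    exact list_prod_mem_of_even_length N hs (fun z hz => hl z (by simp [hz]))
      (by simpa [Nat.even_add_one] using h)

lemma conj_cycle3 (g : Equiv.Perm ℕ) (a b c : ℕ) :
    g * cycle3 a b c * g⁻¹ = cycle3 (g a) (g b) (g c) := by
  simp only [cycle3, Equiv.swap_apply_apply]
  group

lemma cycle3_mul_inv_cycle3 {a b c e : ℕ} (hab : a ≠ b) (hae : a ≠ e) (hbc : b ≠ c)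
    (hbe : b ≠ e) (hce : c ≠ e) :
    cycle3 b c e * (cycle3 a c e)⁻¹ = cycle3 a b c := by
  ext x
  simp only [cycle3, mul_inv_rev, Equiv.swap_inv, Equiv.Perm.mul_apply, Equiv.swap_apply_def]
  split_ifs <;> omega

lemma exists_forall_le_apply_eq_self {σ : Equiv.Perm ℕ} (hσ : σ ∈ SN) :
    ∃ M, ∀ n, M ≤ n → σ n = n := by
  obtain ⟨M, hM⟩ := Set.Finite.bddAbove hσ
  exact ⟨M + 1, fun n hn => not_not.mp fun h => by have := hM h; omega⟩

lemma exists_cycle3_mem_of_ne_one {N : Subgroup (Equiv.Perm ℕ)} (hNS : N ≤ SN)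
    (hN : ∀ g ∈ SN, ∀ x ∈ N, g * x * g⁻¹ ∈ N) {σ : Equiv.Perm ℕ} (hσN : σ ∈ N) (hσ : σ ≠ 1) :
    ∃ a b c, a ≠ b ∧ a ≠ c ∧ b ≠ c ∧ cycle3 a b c ∈ N := by
  obtain ⟨a, ha⟩ : ∃ a, σ a ≠ a := not_forall.mp fun h => hσ (Equiv.ext h)
  obtain ⟨M, hM⟩ := exists_forall_le_apply_eq_self (hNS hσN)
  set b := σ a
  set c := M + a + b + 1
  set e := c + 1
  have hγ : cycle3 a c e * σ⁻¹ * (cycle3 a c e)⁻¹ ∈ N :=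
    hN _ (cycle3_mem_SN a c e) _ (inv_mem hσN)
  have hcomm : σ * (cycle3 a c e * σ⁻¹ * (cycle3 a c e)⁻¹) = cycle3 a b c := by
    calc σ * (cycle3 a c e * σ⁻¹ * (cycle3 a c e)⁻¹)
        = σ * cycle3 a c e * σ⁻¹ * (cycle3 a c e)⁻¹ := by group
      _ = cycle3 b c e * (cycle3 a c e)⁻¹ := by
        rw [conj_cycle3, hM c (by omega), hM e (by omega)]
      _ = cycle3 a b c :=
        cycle3_mul_inv_cycle3 (Ne.symm ha) (by omega) (by omega) (by omega) (by omega)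
  exact ⟨a, b, c, Ne.symm ha, by omega, by omega, hcomm ▸ mul_mem hσN hγ⟩

lemma exists_mem_SN_apply_eq_of_ne {a b c a' b' c' : ℕ} (h₁ : a ≠ b) (h₂ : a ≠ c) (h₃ : b ≠ c)
    (h₁' : a' ≠ b') (h₂' : a' ≠ c') (h₃' : b' ≠ c') :
    ∃ g ∈ SN, g a = a' ∧ g b = b' ∧ g c = c' := by
  set S := a + b + c + a' + b' + c'
  have to_fresh : ∀ x y z : ℕ, x ≠ y → x ≠ z → y ≠ z → x ≤ S → y ≤ S → z ≤ S →
      ∃ g ∈ SN, g x = S + 1 ∧ g y = S + 2 ∧ g z = S + 3 := by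
    intro x y z hxy hxz hyz hx hy hz
    refine ⟨Equiv.swap x (S + 1) * Equiv.swap y (S + 2) * Equiv.swap z (S + 3),
      mul_mem (mul_mem (swap_mem_SN _ _) (swap_mem_SN _ _)) (swap_mem_SN _ _), ?_, ?_, ?_⟩ <;>
    · simp only [Equiv.Perm.mul_apply, Equiv.swap_apply_def]
      split_ifs <;> omega
  obtain ⟨g, hg, hga, hgb, hgc⟩ := to_fresh a b c h₁ h₂ h₃ (by omega) (by omega) (by omega)
  obtain ⟨g', hg', hga', hgb', hgc'⟩ := to_fresh a' b' c' h₁' h₂' h₃' (by omega) (by omega)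
    (by omega)
  refine ⟨g'⁻¹ * g, mul_mem (inv_mem hg') hg, ?_⟩
  simp only [Equiv.Perm.mul_apply, Equiv.Perm.inv_eq_iff_eq, hga, hgb, hgc, hga', hgb', hgc',
    and_self]

lemma cycle3_mem_of_cycle3_mem {N : Subgroup (Equiv.Perm ℕ)}
    (hN : ∀ g ∈ SN, ∀ x ∈ N, g * x * g⁻¹ ∈ N) {a b c a' b' c' : ℕ}
    (h₁ : a ≠ b) (h₂ : a ≠ c) (h₃ : b ≠ c) (hmem : cycle3 a b c ∈ N)
    (h₁' : a' ≠ b') (h₂' : a' ≠ c') (h₃' : b' ≠ c') : cycle3 a' b' c' ∈ N := by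
  obtain ⟨g, hg, rfl, rfl, rfl⟩ := exists_mem_SN_apply_eq_of_ne h₁ h₂ h₃ h₁' h₂' h₃'
  exact conj_cycle3 g a b c ▸ hN g hg _ hmem

lemma swap_mul_swap_mem {N : Subgroup (Equiv.Perm ℕ)}
    (h3 : ∀ a b c, a ≠ b → a ≠ c → b ≠ c → cycle3 a b c ∈ N) {σ τ : Equiv.Perm ℕ}
    (hσ : IsSwap σ) (hτ : IsSwap τ) : σ * τ ∈ N := by
  have shared : ∀ x y z, x ≠ y → x ≠ z → Equiv.swap x y * Equiv.swap x z ∈ N := by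
    intro x y z hxy hxz
    rcases eq_or_ne y z with rfl | hyz
    · simp
    · exact h3 x z y hxz hxy hyz.symm
  obtain ⟨a, b, hab, rfl⟩ := hσ
  obtain ⟨c, d, hcd, rfl⟩ := hτ
  rcases eq_or_ne a c with rfl | hac
  · exact shared a b d hab hcd
  · have : Equiv.swap a b * Equiv.swap c d
        = (Equiv.swap a b * Equiv.swap a c) * (Equiv.swap c a * Equiv.swap c d) := by
      rw [Equiv.swap_comm c a, mul_assoc, ← mul_assoc (Equiv.swap a c), Equiv.swap_mul_self,
        one_mul]
    rw [this]
    exact mul_mem (shared a b c hab hac) (shared c a d hac.symm hcd)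

lemma AN_le_of_forall_cycle3_mem {N : Subgroup (Equiv.Perm ℕ)}
    (h3 : ∀ a b c, a ≠ b → a ≠ c → b ≠ c → cycle3 a b c ∈ N) : AN ≤ N := by
  rintro _ ⟨l, hl, heven, rfl⟩
  exact list_prod_mem_of_even_length N.toSubmonoid (s := {σ | IsSwap σ})
    (fun _ hσ _ hτ => swap_mul_swap_mem h3 hσ hτ) hl heven

lemma AN_le_of_ne_bot {N : Subgroup (Equiv.Perm ℕ)} (hNS : N ≤ SN)
    (hN : ∀ g ∈ SN, ∀ x ∈ N, g * x * g⁻¹ ∈ N) (hbot : N ≠ ⊥) : AN ≤ N := by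
  obtain ⟨σ, hσN, hσ⟩ := (N.bot_or_exists_ne_one).resolve_left hbot
  obtain ⟨a, b, c, h₁, h₂, h₃, hmem⟩ := exists_cycle3_mem_of_ne_one hNS hN hσN hσ
  exact AN_le_of_forall_cycle3_mem fun _ _ _ => cycle3_mem_of_cycle3_mem hN h₁ h₂ h₃ hmem

lemma exists_isSwap_mem_of_not_le_AN {N : Subgroup (Equiv.Perm ℕ)} (hNS : N ≤ SN)
    (hAN : AN ≤ N) (hNA : ¬ N ≤ AN) : ∃ τ ∈ N, IsSwap τ := by
  obtain ⟨σ, hσN, hσA⟩ := SetLike.not_le_iff_exists.mp hNA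
  obtain ⟨l, hl, rfl⟩ := exists_isSwap_list_of_mem_SN (hNS hσN)
  rcases l with _ | ⟨τ, l⟩
  · exact absurd AN.one_mem hσA
  · have heven : Even l.length := by
      by_contra h
      exact hσA ⟨τ :: l, hl, by simpa [Nat.even_add_one] using h, rfl⟩
    have hlN : l.prod ∈ N := hAN ⟨l, fun x hx => hl x (by simp [hx]), heven, rfl⟩
    refine ⟨τ, ?_, hl τ (by simp)⟩
    simpa using mul_mem hσN (inv_mem hlN)

lemma mul_mem_AN_of_isSwap {σ τ : Equiv.Perm ℕ} (hσ : IsSwap σ) (hτ : IsSwap τ) : σ * τ ∈ AN :=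
  ⟨[σ, τ], by simp [hσ, hτ], by simp, by simp⟩

lemma SN_le_of_isSwap_mem {N : Subgroup (Equiv.Perm ℕ)} (hAN : AN ≤ N) {τ : Equiv.Perm ℕ}
    (hτN : τ ∈ N) (hτ : IsSwap τ) : SN ≤ N := by
  rw [SN_eq_closure_isSwap, Subgroup.closure_le]
  intro σ hσ
  have hστ : σ * τ * τ ∈ N := mul_mem (hAN (mul_mem_AN_of_isSwap hσ hτ)) hτN
  obtain ⟨x, y, -, rfl⟩ := hτ
  simpa [mul_assoc] using hστ

/-- Every normal subgroup of the finitary symmetric group `S_ℕ` is trivial,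
the finitary alternating group `A_ℕ`, or all of `S_ℕ`. -/
theorem normal_subgroups_of_SN (N : Subgroup (Equiv.Perm ℕ)) (hNS : N ≤ SN)
    (hnormal : ∀ g ∈ SN, ∀ x ∈ N, g * x * g⁻¹ ∈ N) :
    N = ⊥ ∨ N = AN ∨ N = SN := by
  rcases eq_or_ne N ⊥ with hbot | hbot
  · exact Or.inl hbot
  have hAN : AN ≤ N := AN_le_of_ne_bot hNS hnormal hbot
  by_cases hNA : N ≤ AN
  · exact Or.inr (Or.inl (le_antisymm hNA hAN))
  · obtain ⟨τ, hτN, hτ⟩ := exists_isSwap_mem_of_not_le_AN hNS hAN hNA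
    exact Or.inr (Or.inr (le_antisymm hNS (SN_le_of_isSwap_mem hAN hτN hτ)))
end

section
/- A finite group G has the property that every von Neumann subalgebra of L(G) invariant under the conjugation action of G is of the form L(H) for a normal subgroup H ⊴ G, if and only if G is trivial or G ≅ ℤ/2ℤ. -/
/-- The adjoint (star) operation on the group algebra `ℂ[G]`:
`star (∑ c_g g) = ∑ conj(c_g) g⁻¹`. -/
noncomputable def gaStar {G : Type*} [Group G] (x : MonoidAlgebra ℂ G) : MonoidAlgebra ℂ G :=
  x.coeff.sum fun g c => MonoidAlgebra.single g⁻¹ ((starRingEnd ℂ) c)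

/-!
If `|G| ≤ 2`, then `ℂ[G]` has dimension at most two, so its only subalgebras are
`ℂ = L({1})` and `ℂ[G] = L(G)`. Conversely, let `s = ∑ g` be the sum of all group elements.
Since `s² = |G| s`, `s* = s` and `s` is central, the span of `1` and `s` is an invariant
star-subalgebra. It contains `s`, whose support is all of `G`, so it can only be `L(G)`;
as it has dimension at most two, `|G| ≤ 2`.
-/

open Module MonoidAlgebra

theorem Subalgebra.eq_bot_or_eq_top_of_finrank_le_two {F E : Type*} [Field F] [Ring E]
    [Nontrivial E] [Algebra F E] [FiniteDimensional F E] (hE : finrank F E ≤ 2)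
    (S : Subalgebra F E) : S = ⊥ ∨ S = ⊤ := by
  have hle : finrank F S ≤ finrank F E := Submodule.finrank_le (Subalgebra.toSubmodule S)
  have hpos : 0 < finrank F S := finrank_pos
  obtain hS | hS : finrank F S = 1 ∨ finrank F S = finrank F E := by omega
  · exact .inl (S.eq_bot_of_finrank_one hS)
  · exact .inr (Subalgebra.toSubmodule_injective (Submodule.eq_top_of_finrank_eq hS))

namespace MonoidAlgebra

variable {k G : Type*} [CommSemiring k]

theorem supported_univ [Monoid G] : supported k k (Set.univ : Set G) = ⊤ :=
  eq_top_iff.2 fun _ _ => mem_supported'.2 fun _ hg => (hg trivial).elim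

theorem span_of_image_eq_supported [Monoid G] (s : Set G) :
    Submodule.span k (of k G '' s) = supported k k s := by
  simp only [of_apply, supported_eq_span_single]

variable (k G) [Group G] [Fintype G]

noncomputable def sumOf : MonoidAlgebra k G := ∑ g : G, of k G g

variable {k G}

theorem of_mul_sumOf (g : G) : of k G g * sumOf k G = sumOf k G := by
  simp only [sumOf, Finset.mul_sum, ← map_mul]
  exact Fintype.sum_equiv (Equiv.mulLeft g) _ _ fun _ => rfl

theorem sumOf_mul_of (g : G) : sumOf k G * of k G g = sumOf k G := by
  simp only [sumOf, Finset.sum_mul, ← map_mul]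
  exact Fintype.sum_equiv (Equiv.mulRight g) _ _ fun _ => rfl

theorem sumOf_mul_sumOf : sumOf k G * sumOf k G = Fintype.card G • sumOf k G := by
  calc sumOf k G * sumOf k G = ∑ g : G, of k G g * sumOf k G := Finset.sum_mul ..
    _ = Fintype.card G • sumOf k G := by simp only [of_mul_sumOf, Finset.sum_const, Finset.card_univ]

theorem coeff_sumOf (g : G) : (sumOf k G).coeff g = 1 := by
  classical
  simp [sumOf, coeff_sum, of_apply, coeff_single, Finsupp.single_apply]

variable (k G)

theorem span_one_sumOf_mul_le :
    Submodule.span k {1, sumOf k G} * Submodule.span k {1, sumOf k G} ≤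
      Submodule.span k {1, sumOf k G} := by
  rw [Submodule.span_mul_span, Submodule.span_le]
  rintro _ ⟨a, ha, b, hb, rfl⟩
  have hs : sumOf k G ∈ Submodule.span k {1, sumOf k G} := Submodule.subset_span (by simp)
  rcases ha with rfl | rfl <;> rcases hb with rfl | rfl
  all_goals simp only [one_mul, mul_one, sumOf_mul_sumOf]
  exacts [Submodule.subset_span (by simp), hs, hs, Submodule.smul_of_tower_mem _ _ hs]

noncomputable def spanOneSumOf : Subalgebra k (MonoidAlgebra k G) :=
  (Submodule.span k {1, sumOf k G}).toSubalgebra (Submodule.subset_span (by simp))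
    fun _ _ hx hy => span_one_sumOf_mul_le k G (Submodule.mul_mem_mul hx hy)

variable {k G}

theorem conj_mem_spanOneSumOf (g : G) {x : MonoidAlgebra k G} (hx : x ∈ spanOneSumOf k G) :
    of k G g * x * of k G g⁻¹ ∈ spanOneSumOf k G := by
  let conj := LinearMap.mulRight k (of k G g⁻¹) ∘ₗ LinearMap.mulLeft k (of k G g)
  refine (Submodule.map_span_le conj _ _).2 ?_ (Submodule.mem_map_of_mem hx)
  rintro _ (rfl | rfl)
  · refine Submodule.subset_span (Or.inl ?_)
    change of k G g * 1 * of k G g⁻¹ = 1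
    rw [mul_one, ← map_mul, mul_inv_cancel, map_one]
  · refine Submodule.subset_span (Or.inr ?_)
    change of k G g * sumOf k G * of k G g⁻¹ = sumOf k G
    rw [of_mul_sumOf, sumOf_mul_of]

end MonoidAlgebra

section gaStar

variable {G : Type*} [Group G]

theorem gaStar_single (g : G) (c : ℂ) : gaStar (single g c) = single g⁻¹ (starRingEnd ℂ c) := by
  simp [gaStar]

noncomputable def gaStarₗ : MonoidAlgebra ℂ G →ₛₗ[starRingEnd ℂ] MonoidAlgebra ℂ G where
  toFun := gaStar
  map_add' x y := by
    classical
    simp only [gaStar, coeff_add]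
    exact Finsupp.sum_add_index' (by simp) (by simp [single_add])
  map_smul' c x := by
    simp only [gaStar, coeff_smul]
    rw [Finsupp.sum_smul_index' (by simp), Finsupp.smul_sum]
    simp [smul_single]

theorem gaStar_sumOf [Fintype G] : gaStar (sumOf ℂ G) = sumOf ℂ G := by
  change gaStarₗ (sumOf ℂ G) = _
  simp only [sumOf, map_sum]
  exact Fintype.sum_equiv (Equiv.inv G) _ _ fun g => by simp [gaStarₗ, of_apply, gaStar_single]

theorem gaStar_mem_spanOneSumOf [Fintype G] {x : MonoidAlgebra ℂ G} (hx : x ∈ spanOneSumOf ℂ G) :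
    gaStar x ∈ spanOneSumOf ℂ G := by
  refine (Submodule.map_span_le gaStarₗ _ _).2 ?_ (Submodule.mem_map_of_mem hx)
  rintro _ (rfl | rfl)
  · exact Submodule.subset_span (by simp [gaStarₗ, one_def, gaStar_single])
  · exact Submodule.subset_span (by simp [gaStarₗ, gaStar_sumOf])

end gaStar

def HasISR (G : Type*) [Group G] : Prop :=
  ∀ P : Subalgebra ℂ (MonoidAlgebra ℂ G),
    (∀ x ∈ P, gaStar x ∈ P) →
    (∀ g : G, ∀ x ∈ P, MonoidAlgebra.of ℂ G g * x * MonoidAlgebra.of ℂ G g⁻¹ ∈ P) →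
    ∃ H : Subgroup G, H.Normal ∧
      (P : Set (MonoidAlgebra ℂ G)) =
        ↑(Submodule.span ℂ ((fun h : G => MonoidAlgebra.of ℂ G h) '' (H : Set G)))

section ISR

variable {G : Type*} [Group G] [Fintype G]

theorem card_le_two_of_hasISR (hG : HasISR G) : Fintype.card G ≤ 2 := by
  obtain ⟨H, -, hP⟩ := hG (spanOneSumOf ℂ G) (fun _ => gaStar_mem_spanOneSumOf)
    (fun g _ => conj_mem_spanOneSumOf g)
  rw [span_of_image_eq_supported] at hP
  have hH : (H : Set G) = Set.univ := by
    have hs : sumOf ℂ G ∈ (spanOneSumOf ℂ G : Set (MonoidAlgebra ℂ G)) :=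
      Submodule.subset_span (Set.mem_insert_of_mem _ rfl)
    rw [hP, SetLike.mem_coe] at hs
    refine Set.eq_univ_of_forall fun g => by_contra fun hg => ?_
    simpa [coeff_sumOf] using mem_supported'.1 hs g hg
  have htop : Submodule.span ℂ {1, sumOf ℂ G} = ⊤ := by
    rw [← supported_univ, ← hH]
    exact SetLike.coe_injective hP
  classical
  calc Fintype.card G = finrank ℂ (MonoidAlgebra ℂ G) := (finrank_eq_card_basis (basis G ℂ)).symm
    _ = finrank ℂ (Submodule.span ℂ {1, sumOf ℂ G}) := by rw [htop, finrank_top]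
    _ ≤ 2 := by
      have := finrank_span_finset_le_card (R := ℂ) ({1, sumOf ℂ G} : Finset (MonoidAlgebra ℂ G))
      rw [Finset.coe_pair] at this
      exact this.trans Finset.card_le_two

theorem hasISR_of_card_le_two (hG : Fintype.card G ≤ 2) : HasISR G := by
  intro P _ _
  have hE : finrank ℂ (MonoidAlgebra ℂ G) ≤ 2 := by rwa [finrank_eq_card_basis (basis G ℂ)]
  rcases P.eq_bot_or_eq_top_of_finrank_le_two hE with rfl | rfl
  · refine ⟨⊥, inferInstance, ?_⟩
    rw [Subgroup.coe_bot, Set.image_singleton, map_one, ← Submodule.one_eq_span,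
      ← Algebra.toSubmodule_bot]
    rfl
  · refine ⟨⊤, inferInstance, ?_⟩
    rw [Subgroup.coe_top, span_of_image_eq_supported, supported_univ]
    rfl

theorem card_le_two_iff_card_eq_one_or_mulEquiv_zmod_two :
    Fintype.card G ≤ 2 ↔ Fintype.card G = 1 ∨ Nonempty (G ≃* Multiplicative (ZMod 2)) := by
  constructor
  · intro h
    obtain h1 | h2 : Fintype.card G = 1 ∨ Fintype.card G = 2 := by
      have := Fintype.card_pos (α := G); omega
    · exact .inl h1
    · exact .inr ⟨mulEquivOfPrimeCardEq (p := 2) (by simp [Nat.card_eq_fintype_card, h2])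
        (by simp)⟩
  · rintro (h | ⟨⟨e⟩⟩)
    · omega
    · rw [Fintype.card_congr e.toEquiv]
      rfl

end ISR

/-- A finite group `G` has the ISR property (every star-subalgebra of `L(G) = ℂ[G]`
invariant under the conjugation action of `G` is of the form `L(H)`, the linear
span of a normal subgroup `H ⊴ G`) if and only if `G` is trivial or `G ≅ ℤ/2ℤ`. -/
theorem finite_ISR_iff (G : Type*) [Group G] [Fintype G] :
    (∀ P : Subalgebra ℂ (MonoidAlgebra ℂ G),
      (∀ x ∈ P, gaStar x ∈ P) →
      (∀ g : G, ∀ x ∈ P,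
        MonoidAlgebra.of ℂ G g * x * MonoidAlgebra.of ℂ G g⁻¹ ∈ P) →
      ∃ H : Subgroup G, H.Normal ∧
        (P : Set (MonoidAlgebra ℂ G)) =
          ↑(Submodule.span ℂ ((fun h : G => MonoidAlgebra.of ℂ G h) '' (H : Set G)))) ↔
    (Fintype.card G = 1 ∨ Nonempty (G ≃* Multiplicative (ZMod 2))) :=
  (⟨card_le_two_of_hasISR, hasISR_of_card_le_two⟩ : HasISR G ↔ _).trans
    card_le_two_iff_card_eq_one_or_mulEquiv_zmod_two
end
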